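/- In dimension d = 1, let (R, B) be an affine iterated function system with R an integer, R > 1, B ⊂ ℤ finite with #B = N, with invariant measure μ_B, and suppose the IFS has no overlap. If ν is a Bessel measure for μ_B, then the Beurling dimension of ν satisfies dim ν ≤ log N / log R. -/

import Mathlib

/-!
Fix `b₀ ∈ B` and the contraction `T = τ b₀`. As the pieces `τ_b X` overlap only in null sets,
restricting the invariance identity `μ_B = N⁻¹ Σ_b (τ_b)_* μ_B` to the cylinder `Tⁿ X` gives
`μ_B|_{Tⁿ X} = N⁻ⁿ · Tⁿ_* μ_B`. Modulating the indicator of this cylinder by `e^{2πisx}` thus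
gives a function of `L²`-mass `N⁻ⁿ` whose Fourier transform has modulus `N⁻ⁿ |μ̂_B((t - s)/Rⁿ)|`,
hence at least `N⁻ⁿ/2` on an interval of length `≍ Rⁿ` around `s` (as `μ̂_B(0) = 1` and `X` is
bounded). The Bessel inequality then bounds the `ν`-measure of every interval of length `≍ Rⁿ`
by `≍ Nⁿ = (Rⁿ)^{log N / log R}`, so the `α`-density of `ν` vanishes for every
`α > log N / log R`.
-/

open MeasureTheory Filter Metric Complex Set
open scoped ENNReal NNReal Real Topology

noncomputable section

/-- The Fourier transform of the measure `f dμ` on `ℝ`: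
`(f dμ)^(t) = ∫ f(x) e^{-2πi t x} dμ(x)`. -/
def ftm1 (μ : Measure ℝ) (f : ℝ → ℂ) (t : ℝ) : ℂ :=
  ∫ x, f x * Complex.exp (-(2 * Real.pi * t * x) * Complex.I) ∂μ

/-- `ν` is a Bessel measure for `μ` with bound `B`. -/
def IsBesselBound1 (μ ν : Measure ℝ) (B : ℝ) : Prop :=
  ∀ f : ℝ → ℂ, MemLp f 2 μ →
    ∫⁻ t, (‖ftm1 μ f t‖₊ : ℝ≥0∞) ^ 2 ∂ν ≤ ENNReal.ofReal B * ∫⁻ x, (‖f x‖₊ : ℝ≥0∞) ^ 2 ∂μ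

/-- `ν` is a frame measure for `μ` with bounds `A, B`. -/
def IsFrameBounds1 (μ ν : Measure ℝ) (A B : ℝ) : Prop :=
  ∀ f : ℝ → ℂ, MemLp f 2 μ →
    ENNReal.ofReal A * ∫⁻ x, (‖f x‖₊ : ℝ≥0∞) ^ 2 ∂μ ≤ ∫⁻ t, (‖ftm1 μ f t‖₊ : ℝ≥0∞) ^ 2 ∂ν ∧
    ∫⁻ t, (‖ftm1 μ f t‖₊ : ℝ≥0∞) ^ 2 ∂ν ≤ ENNReal.ofReal B * ∫⁻ x, (‖f x‖₊ : ℝ≥0∞) ^ 2 ∂μ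

/-- The interval `x + R·Q` where `Q = [0,1)`. -/
def cube1 (x R : ℝ) : Set ℝ := Set.Ico x (x + R)

/-- The `α`-upper Beurling density on `ℝ`. -/
def beurlingDensity1 (ν : Measure ℝ) (α : ℝ) : ℝ≥0∞ :=
  limsup (fun R : ℝ => ⨆ x : ℝ, ν (cube1 x R) / ENNReal.ofReal (R ^ α)) atTop

/-- The upper Beurling dimension on `ℝ`. -/
def beurlingDim1 (ν : Measure ℝ) : ℝ≥0∞ :=
  ⨆ (α : ℝ) (_ : 0 ≤ α) (_ : beurlingDensity1 ν α = ∞), ENNReal.ofReal α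

/-- The lower Beurling density on `ℝ`: `D⁻(ν) = liminf_{R→∞} inf_x ν(x+RQ)/R`. -/
def lowerBeurlingDensity1 (ν : Measure ℝ) : ℝ≥0∞ :=
  liminf (fun R : ℝ => ⨅ x : ℝ, ν (cube1 x R) / ENNReal.ofReal R) atTop

section SelfSimilarMeasure

variable {α ι : Type*} [MeasurableSpace α]

theorem eq_smul_sum_map_of_integral_eq [MetricSpace α] [ProperSpace α] [BorelSpace α]
    {μ : Measure α} [IsFiniteMeasure μ] {s : Finset ι} (hs : s.Nonempty) {τ : ι → α → α}
    (hτ : ∀ b, Continuous (τ b))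
    (hinv : ∀ f : α → ℝ, Continuous f → HasCompactSupport f →
      ∫ x, f x ∂μ = (1 / (s.card : ℝ)) * ∑ b ∈ s, ∫ x, f (τ b x) ∂μ) :
    μ = (s.card : ℝ≥0∞)⁻¹ • ∑ b ∈ s, μ.map (τ b) := by
  have : IsFiniteMeasure ((s.card : ℝ≥0∞)⁻¹ • ∑ b ∈ s, μ.map (τ b)) :=
    Measure.smul_finite _ (ENNReal.inv_ne_top.2 (by simpa using hs.ne_empty))
  refine Measure.ext_of_integral_eq_on_compactlySupported fun f => ?_
  have hint : ∀ b ∈ s, Integrable f (μ.map (τ b)) := fun b _ =>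
    f.continuous.integrable_of_hasCompactSupport f.hasCompactSupport
  rw [hinv f f.continuous f.hasCompactSupport, integral_smul_measure,
    integral_finsetSum_measure hint, smul_eq_mul, one_div, ENNReal.toReal_inv,
    ENNReal.toReal_natCast]
  congr 1
  refine Finset.sum_congr rfl fun b _ => ?_
  exact (integral_map (hτ b).aemeasurable f.continuous.aestronglyMeasurable).symm

variable {μ : Measure α} {s : Finset ι} {τ : ι → α → α} {X : Set α} {b₀ : ι}

theorem map_le_card_smul_of_eq_smul_sum_map
    (hμ : μ = (s.card : ℝ≥0∞)⁻¹ • ∑ b ∈ s, μ.map (τ b)) {b : ι} (hb : b ∈ s) :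
    μ.map (τ b) ≤ (s.card : ℝ≥0∞) • μ := by
  have hcard : (s.card : ℝ≥0∞) ≠ 0 := by simpa using Finset.ne_empty_of_mem hb
  calc μ.map (τ b) ≤ ∑ b ∈ s, μ.map (τ b) :=
        Finset.single_le_sum (f := fun b => μ.map (τ b)) (fun _ _ => Measure.zero_le _) hb
    _ = (s.card : ℝ≥0∞) • μ := by
        rw [hμ, smul_smul, ENNReal.mul_inv_cancel hcard (ENNReal.natCast_ne_top _), one_smul,
          ← hμ]

theorem restrict_image_eq_smul_map
    (hμ : μ = (s.card : ℝ≥0∞)⁻¹ • ∑ b ∈ s, μ.map (τ b))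
    (hτ : ∀ b, Measurable (τ b)) (hb₀ : b₀ ∈ s) (he : MeasurableEmbedding (τ b₀))
    (hX : μ Xᶜ = 0)
    (hno : ∀ b ∈ s, ∀ b' ∈ s, b ≠ b' → μ (τ b '' X ∩ τ b' '' X) = 0) (hXm : MeasurableSet X) :
    μ.restrict (τ b₀ '' X) = (s.card : ℝ≥0∞)⁻¹ • μ.map (τ b₀) := by
  have hS : MeasurableSet (τ b₀ '' X) := he.measurableSet_image.2 hXm
  have hother : ∀ b ∈ s, b ≠ b₀ → (μ.map (τ b)).restrict (τ b₀ '' X) = 0 := by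
    intro b hb hne
    rw [Measure.restrict_eq_zero, Measure.map_apply (hτ b) hS]
    have hsub : τ b ⁻¹' (τ b₀ '' X) ⊆ τ b ⁻¹' (τ b '' X ∩ τ b₀ '' X) ∪ Xᶜ := by
      intro x hx
      by_cases hxX : x ∈ X
      · exact Or.inl ⟨⟨x, hxX, rfl⟩, hx⟩
      · exact Or.inr hxX
    refine measure_mono_null hsub (measure_union_null ?_ hX)
    refine le_antisymm ?_ zero_le
    calc μ (τ b ⁻¹' (τ b '' X ∩ τ b₀ '' X))
        ≤ μ.map (τ b) (τ b '' X ∩ τ b₀ '' X) := Measure.le_map_apply (hτ b).aemeasurable _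
      _ ≤ ((s.card : ℝ≥0∞) • μ) (τ b '' X ∩ τ b₀ '' X) :=
          map_le_card_smul_of_eq_smul_sum_map hμ hb _
      _ = 0 := by rw [Measure.smul_apply, hno b hb b₀ hb₀ hne, smul_zero]
  have hself : (μ.map (τ b₀)).restrict (τ b₀ '' X) = μ.map (τ b₀) := by
    rw [he.restrict_map, Set.preimage_image_eq _ he.injective,
      Measure.restrict_eq_self_of_ae_mem (mem_ae_iff.2 hX)]
  conv_lhs => rw [hμ]
  rw [Measure.restrict_smul, ← Measure.restrictₗ_apply, map_sum,
    Finset.sum_eq_single_of_mem b₀ hb₀ fun b hb hne => by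
      rw [Measure.restrictₗ_apply, hother b hb hne],
    Measure.restrictₗ_apply, hself]

theorem MeasurableEmbedding.iterate {α : Type*} [MeasurableSpace α] {f : α → α}
    (hf : MeasurableEmbedding f) (n : ℕ) : MeasurableEmbedding f^[n] := by
  induction n with
  | zero => exact MeasurableEmbedding.id
  | succ n ih => rw [Function.iterate_succ']; exact hf.comp ih

theorem restrict_iterate_image_eq_smul_map
    (hμ : μ = (s.card : ℝ≥0∞)⁻¹ • ∑ b ∈ s, μ.map (τ b))
    (hτ : ∀ b, Measurable (τ b)) (hb₀ : b₀ ∈ s) (he : MeasurableEmbedding (τ b₀))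
    (hX : μ Xᶜ = 0)
    (hno : ∀ b ∈ s, ∀ b' ∈ s, b ≠ b' → μ (τ b '' X ∩ τ b' '' X) = 0) (hXm : MeasurableSet X)
    (hmaps : MapsTo (τ b₀) X X) (n : ℕ) :
    μ.restrict ((τ b₀)^[n] '' X) = ((s.card : ℝ≥0∞)⁻¹) ^ n • μ.map (τ b₀)^[n] := by
  induction n with
  | zero => simpa using Measure.restrict_eq_self_of_ae_mem (mem_ae_iff.2 hX)
  | succ n ih =>
    have hsucc : (τ b₀)^[n + 1] '' X = τ b₀ '' ((τ b₀)^[n] '' X) := by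
      rw [Function.iterate_succ', Set.image_comp]
    have hsub : (τ b₀)^[n + 1] '' X ⊆ τ b₀ '' X := by
      rw [hsucc]
      exact Set.image_mono (hmaps.iterate n).image_subset
    rw [← Measure.restrict_restrict_of_subset hsub,
      restrict_image_eq_smul_map hμ hτ hb₀ he hX hno hXm, Measure.restrict_smul, hsucc,
      he.restrict_map, Set.preimage_image_eq _ he.injective, ih, Measure.map_smul,
      Measure.map_map (hτ b₀) (he.measurable.iterate n), smul_smul, pow_succ',
      ← Function.iterate_succ']

theorem measure_eq_of_restrict_eq_smul_map [IsProbabilityMeasure μ] {g : α → α}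
    (hg : Measurable g) {S : Set α} {p : ℝ≥0∞} (h : μ.restrict S = p • μ.map g) : μ S = p := by
  simpa [Measure.map_apply hg MeasurableSet.univ] using congrArg (· Set.univ) h

end SelfSimilarMeasure

section FourierTransform

variable (μ : Measure ℝ)

theorem ftm1_smul_measure (c : ℝ≥0∞) (f : ℝ → ℂ) (t : ℝ) :
    ftm1 (c • μ) f t = c.toReal • ftm1 μ f t :=
  integral_smul_measure _ _

theorem ftm1_indicator_mul_exp {S : Set ℝ} (hS : MeasurableSet S) (s t : ℝ) :
    ftm1 μ (S.indicator fun x => Complex.exp (2 * π * s * x * I)) t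
      = ftm1 (μ.restrict S) 1 (t - s) := by
  unfold ftm1
  rw [← integral_indicator hS]
  congr 1 with x
  by_cases hx : x ∈ S
  · rw [indicator_of_mem hx, indicator_of_mem hx, Pi.one_apply, one_mul, ← Complex.exp_add]
    push_cast
    ring_nf
  · simp [hx]

theorem norm_ftm1_map_div_add (a c t : ℝ) :
    ‖ftm1 (μ.map fun x => x / a + c) 1 t‖ = ‖ftm1 μ 1 (t / a)‖ := by
  unfold ftm1
  rw [integral_map (by fun_prop) (by fun_prop)]
  have hsplit : ∀ x : ℝ, (1 : ℝ → ℂ) (x / a + c) * Complex.exp (-(2 * π * t * ↑(x / a + c)) * I)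
      = Complex.exp (-(2 * π * t * c) * I)
        * ((1 : ℝ → ℂ) x * Complex.exp (-(2 * π * ↑(t / a) * x) * I)) := by
    intro x
    rw [Pi.one_apply, Pi.one_apply, one_mul, one_mul, ← Complex.exp_add]
    push_cast
    ring_nf
  simp_rw [hsplit]
  rw [integral_const_mul, norm_mul, Complex.norm_exp]
  simp

theorem one_sub_le_norm_ftm1_one [IsProbabilityMeasure μ] {M : ℝ} (hM : ∀ᵐ x ∂μ, |x| ≤ M)
    (u : ℝ) : 1 - 2 * π * |u| * M ≤ ‖ftm1 μ 1 u‖ := by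
  have hdiff : ftm1 μ 1 u - 1 = ∫ x, (Complex.exp (I * ↑(-(2 * π * u * x))) - 1) ∂μ := by
    unfold ftm1
    rw [integral_sub ?_ (integrable_const _), integral_const, probReal_univ, one_smul]
    · congr 1
      refine integral_congr_ae (ae_of_all _ fun x => ?_)
      simp only [Pi.one_apply, one_mul]
      push_cast
      ring_nf
    · exact Integrable.of_bound (by fun_prop) 1
        (ae_of_all _ fun x => (Complex.norm_exp_I_mul_ofReal _).le)
  have hbound : ‖ftm1 μ 1 u - 1‖ ≤ 2 * π * |u| * M := by
    rw [hdiff]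
    refine (norm_integral_le_of_norm_le_const (hM.mono fun x hx => ?_)).trans_eq
      (by rw [probReal_univ, mul_one])
    refine Real.norm_exp_I_mul_ofReal_sub_one_le.trans ?_
    rw [Real.norm_eq_abs, abs_neg, abs_mul, abs_mul, abs_of_pos (by positivity : 0 < 2 * π)]
    gcongr
  have htriangle := norm_sub_norm_le (1 : ℂ) (ftm1 μ 1 u)
  rw [norm_one, norm_sub_rev] at htriangle
  linarith

theorem norm_indicator_exp (S : Set ℝ) (s y : ℝ) :
    ‖S.indicator (fun x => Complex.exp (2 * π * s * x * I)) y‖ = S.indicator 1 y := by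
  by_cases hy : y ∈ S <;> simp [hy, Complex.norm_exp]

theorem memLp_indicator_exp [IsFiniteMeasure μ] {S : Set ℝ} (hS : MeasurableSet S) (s : ℝ) :
    MemLp (S.indicator fun x => Complex.exp (2 * π * s * x * I)) 2 μ :=
  MemLp.of_bound ((Measurable.indicator (by fun_prop) hS).aestronglyMeasurable) 1
    (ae_of_all _ fun y => (norm_indicator_exp S s y).trans_le
      (Set.indicator_le_self' (fun _ _ => zero_le_one) y))

theorem lintegral_nnnorm_indicator_exp_sq {S : Set ℝ} (hS : MeasurableSet S) (s : ℝ) :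
    ∫⁻ y, (‖S.indicator (fun x => Complex.exp (2 * π * s * x * I)) y‖₊ : ℝ≥0∞) ^ 2 ∂μ = μ S := by
  rw [← lintegral_indicator_one hS]
  congr 1 with y
  rw [← enorm_eq_nnnorm, ← ofReal_norm, norm_indicator_exp]
  by_cases hy : y ∈ S <;> simp [hy]

end FourierTransform

theorem IsBesselBound1.mul_measure_le {μ ν : Measure ℝ} {B : ℝ} (hB : IsBesselBound1 μ ν B)
    {f : ℝ → ℂ} (hf : MemLp f 2 μ) {K : Set ℝ} (hK : MeasurableSet K) {c : ℝ} (hc : 0 ≤ c)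
    (hfK : ∀ t ∈ K, c ≤ ‖ftm1 μ f t‖) :
    ENNReal.ofReal (c ^ 2) * ν K ≤ ENNReal.ofReal B * ∫⁻ x, (‖f x‖₊ : ℝ≥0∞) ^ 2 ∂μ :=
  calc ENNReal.ofReal (c ^ 2) * ν K = ∫⁻ _ in K, ENNReal.ofReal (c ^ 2) ∂ν :=
        (setLIntegral_const K _).symm
    _ ≤ ∫⁻ t in K, (‖ftm1 μ f t‖₊ : ℝ≥0∞) ^ 2 ∂ν := by
        refine setLIntegral_mono' hK fun t ht => ?_
        rw [ENNReal.ofReal_pow hc]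
        gcongr
        rw [← ENNReal.ofReal_coe_nnreal, coe_nnnorm]
        exact ENNReal.ofReal_le_ofReal (hfK t ht)
    _ ≤ ∫⁻ t, (‖ftm1 μ f t‖₊ : ℝ≥0∞) ^ 2 ∂ν := setLIntegral_le_lintegral _ _
    _ ≤ ENNReal.ofReal B * ∫⁻ x, (‖f x‖₊ : ℝ≥0∞) ^ 2 ∂μ := hB f hf

section AffineContraction

variable {r b : ℝ}

theorem measurableEmbedding_add_div (hr : r ≠ 0) (b : ℝ) :
    MeasurableEmbedding fun x : ℝ => (x + b) / r := by
  simp only [div_eq_mul_inv]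
  exact (measurableEmbedding_mulRight₀ (inv_ne_zero hr)).comp (measurableEmbedding_addRight b)

theorem exists_iterate_add_div_eq (r b : ℝ) (n : ℕ) :
    ∃ c, ∀ x, (fun x : ℝ => (x + b) / r)^[n] x = x / r ^ n + c := by
  induction n with
  | zero => exact ⟨0, fun x => by simp⟩
  | succ n ih =>
    obtain ⟨c, hc⟩ := ih
    refine ⟨(c + b) / r, fun x => ?_⟩
    rw [Function.iterate_succ_apply', hc, pow_succ, div_mul_eq_div_div, add_div, add_div, add_div,
      add_assoc]

end AffineContraction

section BesselCylinder

variable {μ : Measure ℝ} {X : Set ℝ} {r b : ℝ} {N n : ℕ}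

theorem norm_ftm1_cylinder (hr : r ≠ 0) (hXm : MeasurableSet X)
    (hcyl : μ.restrict ((fun x => (x + b) / r)^[n] '' X)
      = ((N : ℝ≥0∞)⁻¹) ^ n • μ.map (fun x => (x + b) / r)^[n]) (s t : ℝ) :
    ‖ftm1 μ (((fun x => (x + b) / r)^[n] '' X).indicator
        fun x => Complex.exp (2 * π * s * x * I)) t‖
      = ((N : ℝ)⁻¹) ^ n * ‖ftm1 μ 1 ((t - s) / r ^ n)‖ := by
  obtain ⟨c, hc⟩ := exists_iterate_add_div_eq r b n
  have hS := ((measurableEmbedding_add_div hr b).iterate n).measurableSet_image.2 hXm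
  rw [ftm1_indicator_mul_exp μ hS, hcyl, ftm1_smul_measure, norm_smul, funext hc,
    norm_ftm1_map_div_add]
  simp

theorem measure_cube1_le_of_isBesselBound1 {ν : Measure ℝ} {B : ℝ} (hB : IsBesselBound1 μ ν B)
    [IsProbabilityMeasure μ] (hr : 0 < r) (hXm : MeasurableSet X) (hN : N ≠ 0)
    (hcyl : ∀ n, μ.restrict ((fun x => (x + b) / r)^[n] '' X)
      = ((N : ℝ≥0∞)⁻¹) ^ n • μ.map (fun x => (x + b) / r)^[n])
    {M : ℝ} (hM : 0 < M) (hμM : ∀ᵐ x ∂μ, |x| ≤ M) (n : ℕ) (x : ℝ) :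
    ν (cube1 x ((2 * π * M)⁻¹ * r ^ n)) ≤ ENNReal.ofReal (4 * B * N ^ n) := by
  set S := (fun x => (x + b) / r)^[n] '' X
  set c : ℝ := ((N : ℝ)⁻¹) ^ n
  set L := (2 * π * M)⁻¹ * r ^ n
  set s := x + L / 2 with hs
  have hc : 0 < c := by positivity
  have hS : MeasurableSet S :=
    ((measurableEmbedding_add_div hr.ne' b).iterate n).measurableSet_image.2 hXm
  set f : ℝ → ℂ := S.indicator fun x => Complex.exp (2 * π * s * x * I)
  have hμS : μ S = ENNReal.ofReal c := by
    rw [measure_eq_of_restrict_eq_smul_map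
        ((measurableEmbedding_add_div hr.ne' b).iterate n).measurable (hcyl n),
      ENNReal.ofReal_pow (by positivity), ENNReal.ofReal_inv_of_pos (by positivity),
      ENNReal.ofReal_natCast]
  have hlow : ∀ t ∈ cube1 x L, c / 2 ≤ ‖ftm1 μ f t‖ := by
    intro t ht
    rw [norm_ftm1_cylinder hr.ne' hXm (hcyl n)]
    obtain ⟨htx, htL⟩ : x ≤ t ∧ t < x + L := ht
    have hts : |t - s| ≤ L / 2 := abs_le.2 ⟨by linarith [hs], by linarith [hs]⟩
    have hu : 2 * π * |(t - s) / r ^ n| * M ≤ 1 / 2 := by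
      rw [abs_div, abs_of_pos (pow_pos hr n)]
      calc 2 * π * (|t - s| / r ^ n) * M ≤ 2 * π * (L / 2 / r ^ n) * M := by gcongr
        _ = 1 / 2 := by simp only [L]; field_simp
    nlinarith [one_sub_le_norm_ftm1_one μ hμM ((t - s) / r ^ n)]
  have hbessel := hB.mul_measure_le (memLp_indicator_exp μ hS s) measurableSet_Ico
    (by positivity) hlow
  rw [lintegral_nnnorm_indicator_exp_sq μ hS, hμS, ← ENNReal.ofReal_mul' hc.le] at hbessel
  have hscale : ENNReal.ofReal (B * c)
      = ENNReal.ofReal (4 * B * N ^ n) * ENNReal.ofReal ((c / 2) ^ 2) := by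
    rw [← ENNReal.ofReal_mul' (by positivity)]
    have hNc : (N : ℝ) ^ n * c = 1 := by
      rw [← mul_pow, mul_inv_cancel₀ (Nat.cast_ne_zero.2 hN), one_pow]
    congr 1
    linear_combination (-B * c) * hNc
  rw [hscale, mul_comm] at hbessel
  exact (ENNReal.mul_le_mul_iff_left (by positivity) ENNReal.ofReal_ne_top).1 hbessel

end BesselCylinder

section BeurlingDimension

variable {ν : Measure ℝ} {C β : ℝ}

theorem beurlingDensity1_eq_zero_of_measure_cube1_le {L₀ α : ℝ}
    (hν : ∀ L ≥ L₀, ∀ x, ν (cube1 x L) ≤ ENNReal.ofReal (C * L ^ β)) (hβα : β < α) :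
    beurlingDensity1 ν α = 0 := by
  have hbound : ∀ᶠ L in atTop, (⨆ x, ν (cube1 x L) / ENNReal.ofReal (L ^ α))
      ≤ ENNReal.ofReal (C * L ^ (β - α)) := by
    filter_upwards [eventually_ge_atTop L₀, eventually_gt_atTop 0] with L hL hL0
    refine iSup_le fun x => ?_
    calc ν (cube1 x L) / ENNReal.ofReal (L ^ α)
        ≤ ENNReal.ofReal (C * L ^ β) / ENNReal.ofReal (L ^ α) := by gcongr; exact hν L hL x
      _ = ENNReal.ofReal (C * L ^ (β - α)) := by
        rw [← ENNReal.ofReal_div_of_pos (by positivity), Real.rpow_sub hL0, mul_div_assoc]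
  have hlim : Tendsto (fun L : ℝ => ENNReal.ofReal (C * L ^ (β - α))) atTop (𝓝 0) := by
    have h := (tendsto_rpow_neg_atTop (sub_pos.2 hβα)).const_mul C
    rw [mul_zero, neg_sub] at h
    simpa using ENNReal.tendsto_ofReal h
  exact le_antisymm ((limsup_le_limsup hbound).trans_eq hlim.limsup_eq) zero_le

theorem beurlingDim1_le_of_measure_cube1_le {L₀ : ℝ}
    (hν : ∀ L ≥ L₀, ∀ x, ν (cube1 x L) ≤ ENNReal.ofReal (C * L ^ β)) :
    beurlingDim1 ν ≤ ENNReal.ofReal β := by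
  refine iSup₂_le fun α _ => iSup_le fun hα => ENNReal.ofReal_le_ofReal (not_lt.1 fun hβα => ?_)
  simp [beurlingDensity1_eq_zero_of_measure_cube1_le hν hβα] at hα

theorem measure_cube1_le_of_geometric {r N h : ℝ} (hr : 1 < r) (hN : 1 ≤ N) (hh : 0 < h)
    (hC : 0 ≤ C) (hν : ∀ (n : ℕ) x, ν (cube1 x (h * r ^ n)) ≤ ENNReal.ofReal (C * N ^ n))
    {L : ℝ} (hL : h ≤ L) (x : ℝ) :
    ν (cube1 x L) ≤ ENNReal.ofReal (C * N / h ^ Real.logb r N * L ^ Real.logb r N) := by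
  set β := Real.logb r N
  obtain ⟨n, hn, hn'⟩ := exists_nat_pow_near ((one_le_div hh).2 hL) hr
  have hNn : N ^ n ≤ (L / h) ^ β := by
    calc N ^ n = (r ^ n) ^ β := by
          rw [← Real.rpow_pow_comm (by linarith), Real.rpow_logb (by linarith) hr.ne' (by linarith)]
      _ ≤ (L / h) ^ β := by
          gcongr
          exact Real.logb_nonneg hr hN
  calc ν (cube1 x L) ≤ ν (cube1 x (h * r ^ (n + 1))) := by
        refine measure_mono (Set.Ico_subset_Ico_right ?_)
        have := (div_lt_iff₀' hh).1 hn'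
        linarith
    _ ≤ ENNReal.ofReal (C * N ^ (n + 1)) := hν _ x
    _ ≤ ENNReal.ofReal (C * N / h ^ β * L ^ β) := by
        refine ENNReal.ofReal_le_ofReal ?_
        rw [Real.div_rpow (by linarith) hh.le] at hNn
        calc C * N ^ (n + 1) = C * N * N ^ n := by ring
          _ ≤ C * N * (L ^ β / h ^ β) := by gcongr
          _ = C * N / h ^ β * L ^ β := by ring

theorem beurlingDim1_le_logb_of_geometric {r N h : ℝ} (hr : 1 < r) (hN : 1 ≤ N) (hh : 0 < h)
    (hC : 0 ≤ C) (hν : ∀ (n : ℕ) x, ν (cube1 x (h * r ^ n)) ≤ ENNReal.ofReal (C * N ^ n)) :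
    beurlingDim1 ν ≤ ENNReal.ofReal (Real.logb r N) :=
  beurlingDim1_le_of_measure_cube1_le fun _ hL =>
    measure_cube1_le_of_geometric hr hN hh hC hν hL

end BeurlingDimension

theorem stmt18_general (R : ℕ) (hR : 1 < R) (B : Finset ℤ) (hBne : B.Nonempty)
    (τ : ℤ → ℝ → ℝ) (hτ : ∀ b x, τ b x = (x + (b : ℝ)) / (R : ℝ))
    (X : Set ℝ) (hXc : IsCompact X)
    (hX : X = ⋃ b ∈ B, τ b '' X)
    (μB : Measure ℝ) [IsProbabilityMeasure μB]
    (hinv : ∀ f : ℝ → ℝ, Continuous f → HasCompactSupport f →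
      ∫ x, f x ∂μB = (1 / (B.card : ℝ)) * ∑ b ∈ B, ∫ x, f (τ b x) ∂μB)
    (hsuppX : μB Xᶜ = 0)
    (hno : ∀ b ∈ B, ∀ b' ∈ B, b ≠ b' → μB (τ b '' X ∩ τ b' '' X) = 0)
    (ν : Measure ℝ) (hbes : ∃ B' > (0 : ℝ), IsBesselBound1 μB ν B') :
    beurlingDim1 ν ≤ ENNReal.ofReal (Real.log B.card / Real.log R) := by
  obtain ⟨B', hB', hbessel⟩ := hbes
  obtain ⟨b₀, hb₀⟩ := hBne
  have hR₀ : (0 : ℝ) < R := by positivity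
  have hτ_eq : ∀ b, τ b = fun x => (x + (b : ℝ)) / R := fun b => funext (hτ b)
  have hτ_emb : ∀ b, MeasurableEmbedding (τ b) := fun b =>
    hτ_eq b ▸ measurableEmbedding_add_div hR₀.ne' b
  have hτ_cont : ∀ b, Continuous (τ b) := fun b => by rw [hτ_eq b]; fun_prop
  have hXm : MeasurableSet X := hXc.isClosed.measurableSet
  have hmaps : MapsTo (τ b₀) X X := fun x hx => hX ▸ mem_biUnion hb₀ (mem_image_of_mem _ hx)
  have hμ := eq_smul_sum_map_of_integral_eq ⟨b₀, hb₀⟩ hτ_cont hinv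
  have hcyl := restrict_iterate_image_eq_smul_map hμ (fun b => (hτ_emb b).measurable) hb₀
    (hτ_emb b₀) hsuppX hno hXm hmaps
  rw [hτ_eq b₀] at hcyl
  obtain ⟨M, hM, hXM⟩ := hXc.isBounded.exists_pos_norm_le
  have hXae : ∀ᵐ x ∂μB, x ∈ X := mem_ae_iff.2 hsuppX
  have hcube := measure_cube1_le_of_isBesselBound1 hbessel hR₀ hXm (Finset.card_ne_zero.2 ⟨b₀, hb₀⟩)
    hcyl hM (hXae.mono hXM)
  exact beurlingDim1_le_logb_of_geometric (by exact_mod_cast hR)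
    (by exact_mod_cast Finset.card_pos.2 ⟨b₀, hb₀⟩) (by positivity) (by positivity) hcube

/-- In dimension one, let `(R, B)` be an affine IFS (`R > 1` an integer, `B ⊂ ℤ` finite with
`#B = N`, maps `τ_b(x) = (x+b)/R`) with attractor `X`, invariant probability measure `μ_B`,
and no overlap.  If `ν` is a Bessel measure for `μ_B`, then `dim ν ≤ log N / log R`. -/
theorem stmt18 (R : ℕ) (hR : 1 < R) (B : Finset ℤ) (hBne : B.Nonempty)
    (τ : ℤ → ℝ → ℝ) (hτ : ∀ b x, τ b x = (x + (b : ℝ)) / (R : ℝ))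
    (X : Set ℝ) (hXc : IsCompact X) (hXne : X.Nonempty)
    (hX : X = ⋃ b ∈ B, τ b '' X)
    (μB : Measure ℝ) [IsProbabilityMeasure μB]
    (hinv : ∀ f : ℝ → ℝ, Continuous f → HasCompactSupport f →
      ∫ x, f x ∂μB = (1 / (B.card : ℝ)) * ∑ b ∈ B, ∫ x, f (τ b x) ∂μB)
    (hsuppX : μB Xᶜ = 0)
    (hno : ∀ b ∈ B, ∀ b' ∈ B, b ≠ b' → μB (τ b '' X ∩ τ b' '' X) = 0)
    (ν : Measure ℝ) (hbes : ∃ B' > (0 : ℝ), IsBesselBound1 μB ν B') :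
    beurlingDim1 ν ≤ ENNReal.ofReal (Real.log B.card / Real.log R) :=
  stmt18_general R hR B hBne τ hτ X hXc hX μB hinv hsuppX hno ν hbes
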